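/- arXiv:2207.02115 — 2 statements merged into one kernel-verified Lean document; each statement's English description precedes it below -/
import Mathlib

section
/- Let (T₁, T₂) be a pair of isometries on H forming a doubly twisted (𝒰₂-twisted) pair with unitary twist U. Then ker(T₁*) is a reducing subspace for T₂, and (I - T₂T₂*)(ker T₁*) = ker(T₁*) ∩ ker(T₂*). -/
/-!
The twist relation `T₁* T₂ = U* T₂ T₁*` says that `T₁*` intertwines `T₂` with `U* T₂`, so `T₂` maps
`ker T₁*` into itself. Taking adjoints in `T₁ T₂ = U T₂ T₁` and using that the unitary `U` also
commutes with `T₁*` gives `T₁* T₂* = T₂* U T₁*`, the same kind of intertwining for `T₂*`. Once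
`ker T₁*` is invariant under `T₂` and `T₂*`, the projection `I - T₂ T₂*` maps it into itself and
into `ker T₂*`, and fixes every vector of `ker T₂*`.
-/

open ContinuousLinearMap

section StarMonoid

variable {R : Type*} [Monoid R] [StarMul R] {u a b : R}

theorem Commute.star_right_of_mem_unitary (hu : u ∈ unitary R) (h : Commute u a) :
    Commute u (star a) := by
  have hstar : star a * star u = star u * star a := h.star_star.eq.symm
  calc u * star a = u * (star a * (star u * u)) := by rw [Unitary.star_mul_self_of_mem hu, mul_one]
    _ = u * (star u * star a) * u := by rw [← mul_assoc (star a), hstar]; simp only [mul_assoc]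
    _ = star a * u := by rw [← mul_assoc u, Unitary.mul_star_self_of_mem hu, one_mul]

theorem star_mul_star_eq_of_mul_eq_mul_mul (hu : u ∈ unitary R) (hua : Commute u a)
    (h : a * b = u * (b * a)) : star a * star b = star b * u * star a := by
  have hstar : star b * star a = star a * star b * star u := by
    simpa only [star_mul, mul_assoc] using congrArg star h
  calc star a * star b = star a * star b * (star u * u) := by
        rw [Unitary.star_mul_self_of_mem hu, mul_one]
    _ = star b * star a * u := by rw [hstar, mul_assoc _ (star u)]
    _ = star b * u * star a := by
        rw [mul_assoc, ← (hua.star_right_of_mem_unitary hu).eq, mul_assoc]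

end StarMonoid

namespace ContinuousLinearMap

section Semiring

variable {R M N : Type*} [Semiring R] [AddCommMonoid M] [Module R M] [TopologicalSpace M]
  [AddCommMonoid N] [Module R N] [TopologicalSpace N]

theorem mapsTo_ker_of_comp_eq_comp {S : M →L[R] N} {T : M →L[R] M} {Q : N →L[R] N}
    (h : S ∘L T = Q ∘L S) :
    Set.MapsTo T (LinearMap.ker (S : M →ₗ[R] N)) (LinearMap.ker (S : M →ₗ[R] N)) := by
  intro x (hSx : S x = 0)
  change S (T x) = 0
  rw [← comp_apply, h, comp_apply, hSx, map_zero]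

end Semiring

section Ring

variable {R M : Type*} [Ring R] [AddCommGroup M] [Module R M] [TopologicalSpace M]
  [IsTopologicalAddGroup M]

theorem map_one_sub_comp_eq_inf_ker {V W : M →L[R] M} (hWV : W ∘L V = 1) {K : Submodule R M}
    (hVK : Set.MapsTo V K K) (hWK : Set.MapsTo W K K) :
    K.map (((1 : M →L[R] M) - V ∘L W : M →L[R] M) : M →ₗ[R] M) =
      K ⊓ LinearMap.ker (W : M →ₗ[R] M) := by
  have hWVx : ∀ x, W (V x) = x := fun x => by rw [← comp_apply, hWV, one_apply_eq_self]
  ext x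
  simp only [Submodule.mem_map, Submodule.mem_inf, LinearMap.mem_ker, coe_coe, sub_apply,
    one_apply_eq_self, comp_apply]
  constructor
  · rintro ⟨y, hy, rfl⟩
    exact ⟨K.sub_mem hy (hVK (hWK hy)), by rw [map_sub, hWVx, sub_self]⟩
  · rintro ⟨hx, hWx⟩
    exact ⟨x, hx, by rw [hWx, map_zero, sub_zero]⟩

end Ring

end ContinuousLinearMap

theorem stmt12_general {H : Type*} [NormedAddCommGroup H] [InnerProductSpace ℂ H] [CompleteSpace H]
    (T₁ T₂ U : H →L[ℂ] H)
    (h2iso : adjoint T₂ ∘L T₂ = 1)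
    (hUunit : adjoint U ∘L U = 1 ∧ U ∘L adjoint U = 1)
    (hUT₁ : Commute U T₁)
    (htw1 : T₁ ∘L T₂ = U ∘L (T₂ ∘L T₁))
    (htw2 : adjoint T₁ ∘L T₂ = adjoint U ∘L (T₂ ∘L adjoint T₁)) :
    (∀ x ∈ LinearMap.ker (adjoint T₁ : H →ₗ[ℂ] H), T₂ x ∈ LinearMap.ker (adjoint T₁ : H →ₗ[ℂ] H)) ∧
    (∀ x ∈ LinearMap.ker (adjoint T₁ : H →ₗ[ℂ] H), adjoint T₂ x ∈ LinearMap.ker (adjoint T₁ : H →ₗ[ℂ] H)) ∧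
    (LinearMap.ker (adjoint T₁ : H →ₗ[ℂ] H)).map (((1 : H →L[ℂ] H) - T₂ ∘L adjoint T₂ : H →L[ℂ] H) : H →ₗ[ℂ] H)
      = LinearMap.ker (adjoint T₁ : H →ₗ[ℂ] H) ⊓ LinearMap.ker (adjoint T₂ : H →ₗ[ℂ] H) := by
  have hU : U ∈ unitary (H →L[ℂ] H) :=
    Unitary.mem_iff.2 (by simpa only [star_eq_adjoint, mul_def] using hUunit)
  have htw1_adjoint : adjoint T₁ ∘L adjoint T₂ = (adjoint T₂ ∘L U) ∘L adjoint T₁ := by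
    simpa only [star_eq_adjoint, mul_def] using
      star_mul_star_eq_of_mul_eq_mul_mul hU hUT₁ (by simpa only [mul_def] using htw1)
  have hT₂ : Set.MapsTo T₂ (LinearMap.ker (adjoint T₁ : H →ₗ[ℂ] H)) _ :=
    mapsTo_ker_of_comp_eq_comp (htw2.trans (comp_assoc _ _ _).symm)
  have hT₂adj : Set.MapsTo (adjoint T₂) (LinearMap.ker (adjoint T₁ : H →ₗ[ℂ] H)) _ :=
    mapsTo_ker_of_comp_eq_comp htw1_adjoint
  exact ⟨fun x hx => hT₂ hx, fun x hx => hT₂adj hx,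
    map_one_sub_comp_eq_inf_ker h2iso hT₂ hT₂adj⟩

theorem stmt12 {H : Type*} [NormedAddCommGroup H] [InnerProductSpace ℂ H] [CompleteSpace H]
    (T₁ T₂ U : H →L[ℂ] H)
    (h1iso : adjoint T₁ ∘L T₁ = 1) (h2iso : adjoint T₂ ∘L T₂ = 1)
    (hUunit : adjoint U ∘L U = 1 ∧ U ∘L adjoint U = 1)
    (hUT₁ : Commute U T₁) (hUT₂ : Commute U T₂)
    (htw1 : T₁ ∘L T₂ = U ∘L (T₂ ∘L T₁))
    (htw2 : adjoint T₁ ∘L T₂ = adjoint U ∘L (T₂ ∘L adjoint T₁)) :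
    (∀ x ∈ LinearMap.ker (adjoint T₁ : H →ₗ[ℂ] H), T₂ x ∈ LinearMap.ker (adjoint T₁ : H →ₗ[ℂ] H)) ∧
    (∀ x ∈ LinearMap.ker (adjoint T₁ : H →ₗ[ℂ] H), adjoint T₂ x ∈ LinearMap.ker (adjoint T₁ : H →ₗ[ℂ] H)) ∧
    (LinearMap.ker (adjoint T₁ : H →ₗ[ℂ] H)).map (((1 : H →L[ℂ] H) - T₂ ∘L adjoint T₂ : H →L[ℂ] H) : H →ₗ[ℂ] H)
      = LinearMap.ker (adjoint T₁ : H →ₗ[ℂ] H) ⊓ LinearMap.ker (adjoint T₂ : H →ₗ[ℂ] H) :=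
  stmt12_general T₁ T₂ U h2iso hUunit hUT₁ htw1 htw2
end

section
/- Let (T₁, T₂) be a doubly twisted pair of isometries on a Hilbert space H. Then H decomposes uniquely as H = H_{uu} ⊕ H_{us} ⊕ H_{su} ⊕ H_{ss}, where H_{uu} = ⋂_{m₁,m₂ ∈ ℤ₊} T₁^{m₁}T₂^{m₂}H, H_{us} = ⊕_{m₂≥0} T₂^{m₂}(⋂_{m₁≥0} T₁^{m₁} ker T₂*), H_{su} = ⊕_{m₁≥0} T₁^{m₁}(⋂_{m₂≥0} T₂^{m₂} ker T₁*), H_{ss} = ⊕_{m₁,m₂≥0} T₁^{m₁}T₂^{m₂}(ker T₁* ∩ ker T₂*); each subspace reduces both T₁ and T₂; T₁ is unitary on H_{uu} and H_{us}, a unilateral shift on H_{su} and H_{ss}; T₂ is unitary on H_{uu} and H_{su}, a unilateral shift on H_{us} and H_{ss}. -/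
open ContinuousLinearMap

variable {H : Type*} [NormedAddCommGroup H] [InnerProductSpace ℂ H] [CompleteSpace H]

/-- A closed subspace `M` reduces the operator `T`. -/
def Reduces (T : H →L[ℂ] H) (M : Submodule ℂ H) : Prop :=
  (∀ x ∈ M, T x ∈ M) ∧ (∀ x ∈ M, adjoint T x ∈ M)

/-- For an isometry `T` and a `T`-reducing subspace `M`, the restriction `T|_M` is unitary
iff `T M = M`. -/
def UnitaryOn (T : H →L[ℂ] H) (M : Submodule ℂ H) : Prop :=
  M.map (T : H →ₗ[ℂ] H) = M

/-- For an isometry `T` and a `T`-reducing subspace `M`, the restriction `T|_M` is a unilateral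
shift iff `⋂ₙ Tⁿ M = {0}`. -/
def ShiftOn (T : H →L[ℂ] H) (M : Submodule ℂ H) : Prop :=
  (⨅ n : ℕ, M.map ((T ^ n : H →L[ℂ] H) : H →ₗ[ℂ] H)) = ⊥

/-- `H_uu = ⋂ T₁^{m₁} T₂^{m₂} H`. -/
noncomputable def Huu (T₁ T₂ : H →L[ℂ] H) : Submodule ℂ H :=
  ⨅ m : ℕ × ℕ, LinearMap.range (((T₁ ^ m.1) ∘L (T₂ ^ m.2) : H →L[ℂ] H) : H →ₗ[ℂ] H)

/-- `H_us = ⊕_{m₂} T₂^{m₂} (⋂_{m₁} T₁^{m₁} ker T₂*)`. -/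
noncomputable def Hus (T₁ T₂ : H →L[ℂ] H) : Submodule ℂ H :=
  (⨆ m₂ : ℕ, (⨅ m₁ : ℕ, (LinearMap.ker ((adjoint T₂ : H →L[ℂ] H) : H →ₗ[ℂ] H)).map ((T₁ ^ m₁ : H →L[ℂ] H) : H →ₗ[ℂ] H)).map
    ((T₂ ^ m₂ : H →L[ℂ] H) : H →ₗ[ℂ] H)).topologicalClosure

/-- `H_su = ⊕_{m₁} T₁^{m₁} (⋂_{m₂} T₂^{m₂} ker T₁*)`. -/
noncomputable def Hsu (T₁ T₂ : H →L[ℂ] H) : Submodule ℂ H :=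
  (⨆ m₁ : ℕ, (⨅ m₂ : ℕ, (LinearMap.ker ((adjoint T₁ : H →L[ℂ] H) : H →ₗ[ℂ] H)).map ((T₂ ^ m₂ : H →L[ℂ] H) : H →ₗ[ℂ] H)).map
    ((T₁ ^ m₁ : H →L[ℂ] H) : H →ₗ[ℂ] H)).topologicalClosure

/-- `H_ss = ⊕_{m₁,m₂} T₁^{m₁} T₂^{m₂} (ker T₁* ∩ ker T₂*)`. -/
noncomputable def Hss (T₁ T₂ : H →L[ℂ] H) : Submodule ℂ H :=
  (⨆ m : ℕ × ℕ, (LinearMap.ker ((adjoint T₁ : H →L[ℂ] H) : H →ₗ[ℂ] H) ⊓ LinearMap.ker ((adjoint T₂ : H →L[ℂ] H) : H →ₗ[ℂ] H)).map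
    (((T₁ ^ m.1) ∘L (T₂ ^ m.2) : H →L[ℂ] H) : H →ₗ[ℂ] H)).topologicalClosure


/-!
For a single isometry `V`, Wold's decomposition splits the space into `⋂ₙ Vⁿ H`, on which `V` is
unitary, and the closed span of the `Vⁿ (ker V*)`, on which `V` is a shift, and these two pieces
are orthogonal. For a doubly twisted pair, `ker T₂*` reduces `T₁` (and `ker T₁*` reduces `T₂`),
and powers of `T₁`, `T₂`, `T₁*`, `T₂*` can be moved past each other at the cost of a power of the
unitary `U`, which commutes with everything. This makes the four spaces reducing, and puts each of
them inside one Wold piece of `T₁` and one of `T₂`, which gives the unitary/shift behaviour and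
the pairwise orthogonality. A vector orthogonal to all four lies in the unitary part of `T₂` (apply
the Wold decomposition of `T₁` restricted to `ker T₂*`), symmetrically in that of `T₁`, hence in
`H_uu`, so it vanishes. For uniqueness, the same relative Wold decomposition puts every summand of
another such decomposition inside the corresponding canonical space, and orthogonality forces
equality.
-/

open scoped InnerProductSpace

section TwistedCommutation

variable {M : Type*} [Monoid M] {a b w : M}

theorem mul_pow_eq_of_mul_eq (hwa : Commute w a) (hwb : Commute w b)
    (h : a * b = w * (b * a)) (n : ℕ) : a * b ^ n = b ^ n * (a * w ^ n) := by
  induction n with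
  | zero => simp
  | succ n ih =>
    calc a * b ^ (n + 1) = b ^ n * (a * (w ^ n * b)) := by
          rw [pow_succ, ← mul_assoc, ih]; simp only [mul_assoc]
      _ = b ^ n * (a * b * w ^ n) := by rw [(hwb.pow_left n).eq]; simp only [mul_assoc]
      _ = b ^ (n + 1) * (a * w ^ (n + 1)) := by
          rw [h, pow_succ, pow_succ']; simp only [mul_assoc, hwb.left_comm, hwa.left_comm]

theorem pow_mul_pow_eq_of_mul_eq (hwa : Commute w a) (hwb : Commute w b)
    (h : a * b = w * (b * a)) (m n : ℕ) : a ^ m * b ^ n = b ^ n * (a ^ m * w ^ (m * n)) := by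
  induction m with
  | zero => simp
  | succ m ih =>
    calc a ^ (m + 1) * b ^ n = a * b ^ n * (a ^ m * w ^ (m * n)) := by
          rw [pow_succ', mul_assoc, ih, mul_assoc]
      _ = b ^ n * (a * (w ^ n * (a ^ m * w ^ (m * n)))) := by
          rw [mul_pow_eq_of_mul_eq hwa hwb h]; simp only [mul_assoc]
      _ = b ^ n * (a ^ (m + 1) * w ^ ((m + 1) * n)) := by
          rw [(hwa.pow_pow n m).left_comm, show (m + 1) * n = n + m * n by ring, pow_add w,
            pow_succ']
          simp only [mul_assoc]

end TwistedCommutation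

section StarMonoid

variable {A : Type*} [Monoid A] [StarMul A] {a u : A}

theorem Commute.star_left_of_mem_unitary (hu : u ∈ unitary A) (h : Commute u a) :
    Commute (star u) a :=
  calc star u * a = star u * (a * u) * star u := by
        rw [mul_assoc, mul_assoc, Unitary.mul_star_self_of_mem hu, mul_one]
    _ = a * star u := by rw [← h.eq, ← mul_assoc, Unitary.star_mul_self_of_mem hu, one_mul]

theorem star_pow_mul_pow_of_star_mul_self (ha : star a * a = 1) (n : ℕ) :
    star (a ^ n) * a ^ n = 1 := by
  induction n with
  | zero => simp
  | succ n ih =>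
    rw [pow_succ, star_mul, mul_assoc, ← mul_assoc (star (a ^ n)), ih, one_mul, ha]

end StarMonoid

structure IsDoublyTwisted {A : Type*} [Monoid A] [StarMul A] (v₁ v₂ u : A) : Prop where
  star_mul_self₁ : star v₁ * v₁ = 1
  star_mul_self₂ : star v₂ * v₂ = 1
  mem_unitary : u ∈ unitary A
  commute₁ : Commute u v₁
  commute₂ : Commute u v₂
  mul_twist : v₁ * v₂ = u * (v₂ * v₁)
  star_mul_twist : star v₁ * v₂ = star u * (v₂ * star v₁)

namespace IsDoublyTwisted

variable {A : Type*} [Monoid A] [StarMul A] {v₁ v₂ u : A} (h : IsDoublyTwisted v₁ v₂ u)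
include h

theorem commute_star_left₁ : Commute (star u) v₁ :=
  h.commute₁.star_left_of_mem_unitary h.mem_unitary

theorem commute_star_left₂ : Commute (star u) v₂ :=
  h.commute₂.star_left_of_mem_unitary h.mem_unitary

theorem symm : IsDoublyTwisted v₂ v₁ (star u) where
  star_mul_self₁ := h.star_mul_self₂
  star_mul_self₂ := h.star_mul_self₁
  mem_unitary := Unitary.star_mem h.mem_unitary
  commute₁ := h.commute_star_left₂
  commute₂ := h.commute_star_left₁
  mul_twist := by
    rw [h.mul_twist, ← mul_assoc, Unitary.star_mul_self_of_mem h.mem_unitary, one_mul]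
  star_mul_twist := by
    have := congrArg star h.star_mul_twist
    simp only [star_mul, star_star] at this
    rw [star_star, this]
    exact (h.commute₁.mul_right h.commute_star_left₂.star_right).eq.symm

theorem pow_mul_pow (m n : ℕ) : v₁ ^ m * v₂ ^ n = v₂ ^ n * (v₁ ^ m * u ^ (m * n)) :=
  pow_mul_pow_eq_of_mul_eq h.commute₁ h.commute₂ h.mul_twist m n

theorem star_mul_left₂ : star v₂ * v₁ = u * v₁ * star v₂ := by
  simpa only [star_star, mul_assoc] using h.symm.star_mul_twist

theorem star_mul_star₂ : star v₂ * star v₁ = star v₁ * star u * star v₂ := by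
  have := congrArg star h.mul_twist
  simp only [star_mul] at this
  rw [this, mul_assoc, ← h.commute₂.star_star.eq, mul_assoc]

theorem star_mul_pow (n : ℕ) : star v₁ * v₂ ^ n = v₂ ^ n * (star v₁ * star u ^ n) :=
  mul_pow_eq_of_mul_eq h.commute₁.star_star h.commute_star_left₂ h.star_mul_twist n

end IsDoublyTwisted

namespace Submodule

variable {𝕜 E : Type*} [RCLike 𝕜] [NormedAddCommGroup E] [InnerProductSpace 𝕜 E]
  {K M R : Submodule 𝕜 E}

theorem le_sup_of_orthogonal_inf_le {P Q : Submodule 𝕜 E} [P.HasOrthogonalProjection]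
    (hPR : P ≤ R) (h : Pᗮ ⊓ R ≤ Q) : R ≤ P ⊔ Q := by
  conv_lhs => rw [← sup_orthogonal_inf_of_hasOrthogonalProjection hPR]
  exact sup_le_sup_left h P

theorem le_of_sup_eq_top_of_isOrtho (hsup : K ⊔ R = ⊤) (hKM : K ≤ M) (hMR : M ⟂ R) :
    M ≤ K := by
  intro x hx
  obtain ⟨k, hk, r, hr, rfl⟩ := mem_sup.1 (hsup ▸ mem_top : x ∈ K ⊔ R)
  have hr' : r ∈ M := by simpa using M.sub_mem hx (hKM hk)
  rw [inner_self_eq_zero.1 (hMR.inner_eq hr' hr), add_zero]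
  exact hk

theorem isClosed_of_sup_eq_top_of_isOrtho [CompleteSpace E] (hsup : K ⊔ R = ⊤) (hKR : K ⟂ R) :
    IsClosed (K : Set E) := by
  rw [le_antisymm hKR.le (le_of_sup_eq_top_of_isOrtho hsup hKR.le (isOrtho_orthogonal_left R))]
  exact isClosed_orthogonal R

end Submodule

section Wold

variable {𝕜 E : Type*} [RCLike 𝕜] [NormedAddCommGroup E] [InnerProductSpace 𝕜 E]
  {T S : E →L[𝕜] E} {K M N : Submodule 𝕜 E} {x y k : E}

theorem pow_apply_mem_of_forall_mem (hM : ∀ x ∈ M, S x ∈ M) (n : ℕ) (hx : x ∈ M) :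
    (S ^ n) x ∈ M := by
  rw [pow_apply_eq_iterate]
  exact Set.MapsTo.iterate (fun x hx => hM x hx) n hx

theorem apply_mem_ker_of_mul_eq {A W : E →L[𝕜] E} (hAS : A * S = W * A)
    (hx : x ∈ LinearMap.ker (A : E →ₗ[𝕜] E)) : S x ∈ LinearMap.ker (A : E →ₗ[𝕜] E) := by
  simp only [LinearMap.mem_ker, ContinuousLinearMap.coe_coe] at hx ⊢
  rw [← mul_apply_eq_comp, hAS, mul_apply_eq_comp, hx, map_zero]

/-- When `M` reduces the isometry `T`, the part of `M` on which `T` is unitary. -/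
def unitaryPart (T : E →L[𝕜] E) (M : Submodule 𝕜 E) : Submodule 𝕜 E :=
  ⨅ n : ℕ, M.map ((T ^ n : E →L[𝕜] E) : E →ₗ[𝕜] E)

theorem mem_unitaryPart : x ∈ unitaryPart T M ↔ ∀ n, ∃ y ∈ M, (T ^ n) y = x := by
  simp only [unitaryPart, Submodule.mem_iInf, Submodule.mem_map, ContinuousLinearMap.coe_coe]

theorem unitaryPart_le (T : E →L[𝕜] E) (M : Submodule 𝕜 E) : unitaryPart T M ≤ M := fun x hx => by
  simpa using mem_unitaryPart.1 hx 0

theorem unitaryPart_mono (T : E →L[𝕜] E) (hMN : M ≤ N) : unitaryPart T M ≤ unitaryPart T N :=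
  iInf_mono fun _ => Submodule.map_mono hMN

theorem apply_mem_unitaryPart_of_commute (hST : Commute S T) (hMS : ∀ x ∈ M, S x ∈ M)
    (hx : x ∈ unitaryPart T M) : S x ∈ unitaryPart T M := by
  refine mem_unitaryPart.2 fun n => ?_
  obtain ⟨y, hy, rfl⟩ := mem_unitaryPart.1 hx n
  exact ⟨S y, hMS y hy, by rw [← mul_apply_eq_comp, ← (hST.pow_right n).eq, mul_apply_eq_comp]⟩

theorem map_pow_eq_self_of_map_eq (hK : K.map (T : E →ₗ[𝕜] E) = K) (n : ℕ) :
    K.map ((T ^ n : E →L[𝕜] E) : E →ₗ[𝕜] E) = K := by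
  induction n with
  | zero => simp [Module.End.one_eq_id]
  | succ n ih => rw [pow_succ, toLinearMap_mul, Module.End.mul_eq_comp, Submodule.map_comp, hK, ih]

theorem le_unitaryPart_of_map_eq (hK : K.map (T : E →ₗ[𝕜] E) = K) : K ≤ unitaryPart T ⊤ := by
  have : unitaryPart T K = K := by
    simp only [unitaryPart, map_pow_eq_self_of_map_eq hK, iInf_const]
  exact this.ge.trans (unitaryPart_mono T le_top)

variable [CompleteSpace E]

theorem ContinuousLinearMap.adjoint_pow (T : E →L[𝕜] E) (n : ℕ) : adjoint (T ^ n) = adjoint T ^ n :=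
  star_pow T n

theorem pow_apply_adjoint_pow_apply_eq_self
    (h : ∀ n, T (adjoint T ((adjoint T ^ n) x)) = (adjoint T ^ n) x) (n : ℕ) :
    (T ^ n) ((adjoint T ^ n) x) = x := by
  induction n with
  | zero => simp
  | succ n ih => rw [pow_succ, pow_succ', mul_apply_eq_comp, mul_apply_eq_comp, h, ih]

/-- When `M` reduces the isometry `T`, the part of `M` on which `T` is a unilateral shift. -/
noncomputable def wanderingSpan (T : E →L[𝕜] E) (M : Submodule 𝕜 E) : Submodule 𝕜 E :=
  (⨆ n : ℕ, (M ⊓ LinearMap.ker ((adjoint T : E →L[𝕜] E) : E →ₗ[𝕜] E)).map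
    ((T ^ n : E →L[𝕜] E) : E →ₗ[𝕜] E)).topologicalClosure

theorem pow_apply_mem_wanderingSpan (hk : k ∈ M) (hk' : adjoint T k = 0) (n : ℕ) :
    (T ^ n) k ∈ wanderingSpan T M :=
  Submodule.le_topologicalClosure _ (Submodule.mem_iSup_of_mem n ⟨k, ⟨hk, hk'⟩, rfl⟩)

theorem wanderingSpan_le (hN : IsClosed (N : Set E))
    (h : ∀ n, ∀ k ∈ M, adjoint T k = 0 → (T ^ n) k ∈ N) : wanderingSpan T M ≤ N :=
  Submodule.topologicalClosure_minimal _
    (iSup_le fun n => by rintro _ ⟨k, ⟨hk, hk'⟩, rfl⟩; exact h n k hk hk') hN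

section Isometry

variable (hT : adjoint T ∘L T = 1)
include hT

theorem adjoint_apply_apply (x : E) : adjoint T (T x) = x := by
  simpa using DFunLike.congr_fun hT x

theorem adjoint_pow_comp_pow (n : ℕ) : adjoint (T ^ n) ∘L T ^ n = 1 :=
  star_pow_mul_pow_of_star_mul_self hT n

theorem adjoint_pow_apply_pow_apply (n : ℕ) (y : E) : (adjoint T ^ n) ((T ^ n) y) = y := by
  rw [← adjoint_pow]; exact DFunLike.congr_fun (adjoint_pow_comp_pow hT n) y

theorem inner_pow_apply_pow_apply (n : ℕ) (x y : E) : ⟪(T ^ n) x, (T ^ n) y⟫_𝕜 = ⟪x, y⟫_𝕜 :=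
  (inner_map_map_iff_adjoint_comp_self _).2 (adjoint_pow_comp_pow hT n) x y

theorem apply_adjoint_apply_eq_self_of_inner (hy : ⟪y, y - T (adjoint T y)⟫_𝕜 = 0) :
    T (adjoint T y) = y := by
  set d := y - T (adjoint T y)
  have hd : adjoint T d = 0 := by simp [d, adjoint_apply_apply hT]
  have : ⟪d, d⟫_𝕜 = 0 := by
    rw [← hy]
    nth_rw 1 [show y = d + T (adjoint T y) by simp [d]]
    rw [inner_add_left, ← adjoint_inner_right, hd, inner_zero_right, add_zero]
  exact (sub_eq_zero.1 (inner_self_eq_zero.1 this)).symm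

theorem isClosed_unitaryPart_top : IsClosed (unitaryPart T ⊤ : Set E) := by
  simp only [unitaryPart, Submodule.map_top, Submodule.coe_iInf, LinearMap.coe_range,
    ContinuousLinearMap.coe_coe]
  exact isClosed_iInter fun n => ((isometry_iff_adjoint_comp_self _).2
    (adjoint_pow_comp_pow hT n)).isClosedEmbedding.isClosed_range

theorem adjoint_apply_mem_unitaryPart (hx : x ∈ unitaryPart T M) :
    adjoint T x ∈ unitaryPart T M := by
  refine mem_unitaryPart.2 fun n => ?_
  obtain ⟨y, hy, rfl⟩ := mem_unitaryPart.1 hx (n + 1)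
  exact ⟨y, hy, by rw [pow_succ', mul_apply_eq_comp, adjoint_apply_apply hT]⟩

theorem pow_apply_adjoint_pow_apply_of_mem_unitaryPart (hx : x ∈ unitaryPart T M) (n : ℕ) :
    (T ^ n) ((adjoint T ^ n) x) = x := by
  obtain ⟨y, -, rfl⟩ := mem_unitaryPart.1 hx n
  rw [adjoint_pow_apply_pow_apply hT]

theorem map_eq_self_of_le_unitaryPart (hMT : ∀ x ∈ M, T x ∈ M) (hMA : ∀ x ∈ M, adjoint T x ∈ M)
    (hM : M ≤ unitaryPart T ⊤) : M.map (T : E →ₗ[𝕜] E) = M := by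
  refine le_antisymm (Submodule.map_le_iff_le_comap.2 hMT) fun x hx => ⟨adjoint T x, hMA x hx, ?_⟩
  simpa using pow_apply_adjoint_pow_apply_of_mem_unitaryPart hT (hM hx) 1

theorem inf_le_unitaryPart (hK : K.map (T : E →ₗ[𝕜] E) = K) (hM : ∀ x ∈ M, adjoint T x ∈ M) :
    K ⊓ M ≤ unitaryPart T M := by
  rintro x ⟨hxK, hxM⟩
  refine mem_unitaryPart.2 fun n => ?_
  obtain ⟨y, hy, rfl⟩ := (map_pow_eq_self_of_map_eq hK n).symm ▸ hxK
  refine ⟨y, ?_, rfl⟩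
  simpa only [ContinuousLinearMap.coe_coe, adjoint_pow_apply_pow_apply hT] using
    pow_apply_mem_of_forall_mem hM n hxM

theorem unitaryPart_isOrtho_wanderingSpan (M : Submodule 𝕜 E) :
    unitaryPart T ⊤ ⟂ wanderingSpan T M := by
  rw [wanderingSpan, Submodule.isOrtho_iff_le, Submodule.orthogonal_closure,
    ← Submodule.isOrtho_iff_le, Submodule.isOrtho_iSup_right]
  rintro n x hx _ ⟨k, ⟨-, hk⟩, rfl⟩
  obtain ⟨y, -, rfl⟩ := mem_unitaryPart.1 hx (n + 1)
  change adjoint T k = 0 at hk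
  rw [ContinuousLinearMap.coe_coe, pow_succ, mul_apply_eq_comp, inner_pow_apply_pow_apply hT,
    ← adjoint_inner_left, hk, inner_zero_left]

theorem unitaryPart_eq_bot_of_le_wanderingSpan (hM : M ≤ wanderingSpan T N) :
    unitaryPart T M = ⊥ :=
  le_bot_iff.1 <| (unitaryPart_isOrtho_wanderingSpan hT N).disjoint
    (unitaryPart_mono T le_top) ((unitaryPart_le T M).trans hM)

theorem pow_apply_adjoint_pow_apply_eq_self_of_inner
    (hx : ∀ n, ⟪x, (T ^ n) ((adjoint T ^ n) x - T (adjoint T ((adjoint T ^ n) x)))⟫_𝕜 = 0)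
    (n : ℕ) : (T ^ n) ((adjoint T ^ n) x) = x :=
  pow_apply_adjoint_pow_apply_eq_self (fun n => apply_adjoint_apply_eq_self_of_inner hT <| by
    simpa only [← adjoint_inner_left, adjoint_pow] using hx n) n

theorem mem_unitaryPart_of_forall_inner (hMT : ∀ x ∈ M, T x ∈ M)
    (hMA : ∀ x ∈ M, adjoint T x ∈ M) (hx : x ∈ M)
    (h : ∀ n, ∀ k ∈ M, adjoint T k = 0 → ⟪x, (T ^ n) k⟫_𝕜 = 0) : x ∈ unitaryPart T M := by
  have hpow : ∀ n, (adjoint T ^ n) x ∈ M := fun n => pow_apply_mem_of_forall_mem hMA n hx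
  refine mem_unitaryPart.2 fun n =>
    ⟨_, hpow n, pow_apply_adjoint_pow_apply_eq_self_of_inner hT (fun m => h m _ ?_ ?_) n⟩
  · exact M.sub_mem (hpow m) (hMT _ (hMA _ (hpow m)))
  · simp [adjoint_apply_apply hT]

theorem le_wanderingSpan (hMc : IsClosed (M : Set E)) (hMT : ∀ x ∈ M, T x ∈ M)
    (hMA : ∀ x ∈ M, adjoint T x ∈ M) (hM : unitaryPart T M = ⊥) : M ≤ wanderingSpan T M := by
  intro x hx
  have : CompleteSpace (wanderingSpan T M) := Submodule.topologicalClosure.completeSpace _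
  obtain ⟨u, hu, z, hz, rfl⟩ := (wanderingSpan T M).exists_add_mem_mem_orthogonal x
  have hWM : wanderingSpan T M ≤ M :=
    wanderingSpan_le hMc fun n k hk _ => pow_apply_mem_of_forall_mem hMT n hk
  have hzM : z ∈ M := by simpa using M.sub_mem hx (hWM hu)
  have hz0 : z ∈ unitaryPart T M := mem_unitaryPart_of_forall_inner hT hMT hMA hzM
    fun n k hk hk' => Submodule.inner_left_of_mem_orthogonal
      (pow_apply_mem_wanderingSpan hk hk' n) hz
  rw [hM, Submodule.mem_bot] at hz0
  simpa [hz0] using hu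

end Isometry

end Wold

theorem Reduces.inf {T : H →L[ℂ] H} {M N : Submodule ℂ H} (hM : Reduces T M) (hN : Reduces T N) :
    Reduces T (M ⊓ N) :=
  ⟨fun x hx => ⟨hM.1 x hx.1, hN.1 x hx.2⟩, fun x hx => ⟨hM.2 x hx.1, hN.2 x hx.2⟩⟩

omit [CompleteSpace H] in
theorem mem_Huu {T₁ T₂ : H →L[ℂ] H} {x : H} :
    x ∈ Huu T₁ T₂ ↔ ∀ a b : ℕ, ∃ y, (T₁ ^ a) ((T₂ ^ b) y) = x := by
  simp only [Huu, Submodule.mem_iInf, LinearMap.mem_range, ContinuousLinearMap.coe_coe,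
    ContinuousLinearMap.coe_comp, Function.comp_apply, Prod.forall]

theorem reduces_unitaryPart_top {T : H →L[ℂ] H} (hT : adjoint T ∘L T = 1) :
    Reduces T (unitaryPart T ⊤) :=
  ⟨fun _ => apply_mem_unitaryPart_of_commute (Commute.refl T) fun _ _ => Submodule.mem_top,
    fun _ => adjoint_apply_mem_unitaryPart hT⟩

section Hus

variable {T₁ T₂ : H →L[ℂ] H} {s : H}

theorem pow_apply_mem_Hus
    (hs : s ∈ unitaryPart T₁ (LinearMap.ker ((adjoint T₂ : H →L[ℂ] H) : H →ₗ[ℂ] H))) (n : ℕ) :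
    (T₂ ^ n) s ∈ Hus T₁ T₂ :=
  Submodule.le_topologicalClosure _ (Submodule.mem_iSup_of_mem n ⟨s, hs, rfl⟩)

theorem Hus_le {N : Submodule ℂ H} (hN : IsClosed (N : Set H))
    (h : ∀ n, ∀ s ∈ unitaryPart T₁ (LinearMap.ker ((adjoint T₂ : H →L[ℂ] H) : H →ₗ[ℂ] H)),
      (T₂ ^ n) s ∈ N) :
    Hus T₁ T₂ ≤ N :=
  Submodule.topologicalClosure_minimal _
    (iSup_le fun n => by rintro _ ⟨s, hs, rfl⟩; exact h n s hs) hN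

theorem apply_mem_Hus {S : H →L[ℂ] H}
    (hS : ∀ n, ∀ s ∈ unitaryPart T₁ (LinearMap.ker ((adjoint T₂ : H →L[ℂ] H) : H →ₗ[ℂ] H)),
      S ((T₂ ^ n) s) ∈ Hus T₁ T₂)
    {x : H} (hx : x ∈ Hus T₁ T₂) : S x ∈ Hus T₁ T₂ :=
  Hus_le (N := (Hus T₁ T₂).comap (S : H →ₗ[ℂ] H))
    ((Submodule.isClosed_topologicalClosure _).preimage S.continuous) hS hx

end Hus

section Hss

variable {T₁ T₂ : H →L[ℂ] H} {w : H}

theorem pow_apply_pow_apply_mem_Hss (a b : ℕ) (hw₁ : adjoint T₁ w = 0) (hw₂ : adjoint T₂ w = 0) :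
    (T₁ ^ a) ((T₂ ^ b) w) ∈ Hss T₁ T₂ :=
  Submodule.le_topologicalClosure _ (Submodule.mem_iSup_of_mem (a, b) ⟨w, ⟨hw₁, hw₂⟩, rfl⟩)

theorem Hss_le {N : Submodule ℂ H} (hN : IsClosed (N : Set H))
    (h : ∀ a b w, adjoint T₁ w = 0 → adjoint T₂ w = 0 → (T₁ ^ a) ((T₂ ^ b) w) ∈ N) :
    Hss T₁ T₂ ≤ N :=
  Submodule.topologicalClosure_minimal _
    (iSup_le fun ab => by rintro _ ⟨w, ⟨hw₁, hw₂⟩, rfl⟩; exact h ab.1 ab.2 w hw₁ hw₂) hN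

theorem apply_mem_Hss {S : H →L[ℂ] H}
    (hS : ∀ a b w, adjoint T₁ w = 0 → adjoint T₂ w = 0 → S ((T₁ ^ a) ((T₂ ^ b) w)) ∈ Hss T₁ T₂)
    {x : H} (hx : x ∈ Hss T₁ T₂) : S x ∈ Hss T₁ T₂ :=
  Hss_le (N := (Hss T₁ T₂).comap (S : H →ₗ[ℂ] H))
    ((Submodule.isClosed_topologicalClosure _).preimage S.continuous) hS hx

end Hss

namespace IsDoublyTwisted

variable {T₁ T₂ U : H →L[ℂ] H} (h : IsDoublyTwisted T₁ T₂ U) {K : Submodule ℂ H} {x : H}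
include h

theorem pow_apply_pow_apply (m n : ℕ) (x : H) :
    (T₁ ^ m) ((T₂ ^ n) x) = (T₂ ^ n) ((T₁ ^ m) ((U ^ (m * n)) x)) := by
  simpa only [mul_apply_eq_comp] using DFunLike.congr_fun (h.pow_mul_pow m n) x

theorem adjoint_apply_pow_apply (n : ℕ) (x : H) :
    adjoint T₁ ((T₂ ^ n) x) = (T₂ ^ n) (adjoint T₁ ((adjoint U ^ n) x)) := by
  simpa only [mul_apply_eq_comp, star_eq_adjoint] using DFunLike.congr_fun (h.star_mul_pow n) x

theorem reduces₁_ker₂ : Reduces T₁ (LinearMap.ker ((adjoint T₂ : H →L[ℂ] H) : H →ₗ[ℂ] H)) :=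
  ⟨fun _ => apply_mem_ker_of_mul_eq h.star_mul_left₂,
    fun _ => apply_mem_ker_of_mul_eq h.star_mul_star₂⟩

theorem reducesU_ker₂ : Reduces U (LinearMap.ker ((adjoint T₂ : H →L[ℂ] H) : H →ₗ[ℂ] H)) :=
  ⟨fun _ => apply_mem_ker_of_mul_eq h.commute_star_left₂.star_right.eq.symm,
    fun _ => apply_mem_ker_of_mul_eq h.commute₂.star_star.eq.symm⟩

theorem reducesU_ker₁ : Reduces U (LinearMap.ker ((adjoint T₁ : H →L[ℂ] H) : H →ₗ[ℂ] H)) :=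
  ⟨fun _ => apply_mem_ker_of_mul_eq h.commute_star_left₁.star_right.eq.symm,
    fun _ => apply_mem_ker_of_mul_eq h.commute₁.star_star.eq.symm⟩

theorem reduces₂_unitaryPart₁ : Reduces T₂ (unitaryPart T₁ ⊤) := by
  constructor
  · intro x hx
    refine mem_unitaryPart.2 fun n => ?_
    obtain ⟨y, -, rfl⟩ := mem_unitaryPart.1 hx n
    exact ⟨_, Submodule.mem_top, by simpa using (h.symm.pow_apply_pow_apply 1 n y).symm⟩
  · intro x hx
    refine mem_unitaryPart.2 fun n => ?_
    obtain ⟨y, -, rfl⟩ := mem_unitaryPart.1 hx n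
    exact ⟨_, Submodule.mem_top, (h.symm.adjoint_apply_pow_apply n y).symm⟩

theorem Huu_eq : Huu T₁ T₂ = unitaryPart T₁ ⊤ ⊓ unitaryPart T₂ ⊤ := by
  apply le_antisymm
  · intro x hx
    refine ⟨mem_unitaryPart.2 fun n => ?_, mem_unitaryPart.2 fun n => ?_⟩
    · obtain ⟨y, hy⟩ := mem_Huu.1 hx n 0
      exact ⟨y, Submodule.mem_top, by simpa using hy⟩
    · obtain ⟨y, hy⟩ := mem_Huu.1 hx 0 n
      exact ⟨y, Submodule.mem_top, by simpa using hy⟩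
  · rintro x ⟨hx₁, hx₂⟩
    refine mem_Huu.2 fun a b => ?_
    have := pow_apply_mem_of_forall_mem h.symm.reduces₂_unitaryPart₁.2 a hx₂
    obtain ⟨y, -, hy⟩ := mem_unitaryPart.1 this b
    exact ⟨y, by rw [hy, pow_apply_adjoint_pow_apply_of_mem_unitaryPart h.star_mul_self₁ hx₁]⟩

theorem Huu_comm : Huu T₁ T₂ = Huu T₂ T₁ := by
  rw [h.Huu_eq, h.symm.Huu_eq, inf_comm]

theorem isClosed_Huu : IsClosed (Huu T₁ T₂ : Set H) := by
  rw [h.Huu_eq, Submodule.coe_inf]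
  exact (isClosed_unitaryPart_top h.star_mul_self₁).inter
    (isClosed_unitaryPart_top h.star_mul_self₂)

theorem reduces₁_Huu : Reduces T₁ (Huu T₁ T₂) := by
  rw [h.Huu_eq]
  exact (reduces_unitaryPart_top h.star_mul_self₁).inf h.symm.reduces₂_unitaryPart₁

theorem reduces₂_Huu : Reduces T₂ (Huu T₁ T₂) := by
  rw [h.Huu_comm]
  exact h.symm.reduces₁_Huu

theorem unitaryOn₁_Huu : UnitaryOn T₁ (Huu T₁ T₂) :=
  map_eq_self_of_le_unitaryPart h.star_mul_self₁ h.reduces₁_Huu.1 h.reduces₁_Huu.2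
    (h.Huu_eq ▸ inf_le_left)

theorem unitaryOn₂_Huu : UnitaryOn T₂ (Huu T₁ T₂) := by
  rw [h.Huu_comm]
  exact h.symm.unitaryOn₁_Huu

theorem le_Huu (hK₁ : UnitaryOn T₁ K) (hK₂ : UnitaryOn T₂ K) : K ≤ Huu T₁ T₂ :=
  h.Huu_eq ▸ le_inf (le_unitaryPart_of_map_eq hK₁) (le_unitaryPart_of_map_eq hK₂)

theorem reduces₁_unitaryPart_ker₂ :
    Reduces T₁ (unitaryPart T₁ (LinearMap.ker ((adjoint T₂ : H →L[ℂ] H) : H →ₗ[ℂ] H))) :=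
  ⟨fun _ => apply_mem_unitaryPart_of_commute (Commute.refl T₁) h.reduces₁_ker₂.1,
    fun _ => adjoint_apply_mem_unitaryPart h.star_mul_self₁⟩

theorem reducesU_unitaryPart_ker₂ :
    Reduces U (unitaryPart T₁ (LinearMap.ker ((adjoint T₂ : H →L[ℂ] H) : H →ₗ[ℂ] H))) :=
  ⟨fun _ => apply_mem_unitaryPart_of_commute h.commute₁ h.reducesU_ker₂.1,
    fun _ => apply_mem_unitaryPart_of_commute h.commute_star_left₁ h.reducesU_ker₂.2⟩

theorem reduces₁_Hus : Reduces T₁ (Hus T₁ T₂) := by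
  constructor <;> intro x <;> refine apply_mem_Hus fun n s hs => ?_
  · rw [show T₁ ((T₂ ^ n) s) = (T₂ ^ n) (T₁ ((U ^ n) s)) by
      simpa using h.pow_apply_pow_apply 1 n s]
    exact pow_apply_mem_Hus (h.reduces₁_unitaryPart_ker₂.1 _
      (pow_apply_mem_of_forall_mem h.reducesU_unitaryPart_ker₂.1 n hs)) n
  · rw [h.adjoint_apply_pow_apply]
    exact pow_apply_mem_Hus (h.reduces₁_unitaryPart_ker₂.2 _
      (pow_apply_mem_of_forall_mem h.reducesU_unitaryPart_ker₂.2 n hs)) n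

theorem reduces₂_Hus : Reduces T₂ (Hus T₁ T₂) := by
  constructor <;> intro x <;> refine apply_mem_Hus fun n s hs => ?_
  · rw [← mul_apply_eq_comp, ← pow_succ']
    exact pow_apply_mem_Hus hs (n + 1)
  · cases n with
    | zero =>
      have : adjoint T₂ s = 0 := unitaryPart_le _ _ hs
      simp [this]
    | succ n =>
      rw [pow_succ', mul_apply_eq_comp, adjoint_apply_apply h.star_mul_self₂]
      exact pow_apply_mem_Hus hs n

theorem Hus_le_unitaryPart : Hus T₁ T₂ ≤ unitaryPart T₁ ⊤ :=
  Hus_le (isClosed_unitaryPart_top h.star_mul_self₁) fun n s hs => mem_unitaryPart.2 fun m => by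
    obtain ⟨k, -, rfl⟩ := mem_unitaryPart.1 hs m
    exact ⟨_, Submodule.mem_top, (h.symm.pow_apply_pow_apply n m k).symm⟩

omit h in
theorem Hus_le_wanderingSpan : Hus T₁ T₂ ≤ wanderingSpan T₂ ⊤ :=
  Submodule.topologicalClosure_mono
    (iSup_mono fun _ => Submodule.map_mono (le_inf le_top (unitaryPart_le T₁ _)))

theorem unitaryOn₁_Hus : UnitaryOn T₁ (Hus T₁ T₂) :=
  map_eq_self_of_le_unitaryPart h.star_mul_self₁ h.reduces₁_Hus.1 h.reduces₁_Hus.2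
    h.Hus_le_unitaryPart

theorem shiftOn₂_Hus : ShiftOn T₂ (Hus T₁ T₂) :=
  unitaryPart_eq_bot_of_le_wanderingSpan h.star_mul_self₂ Hus_le_wanderingSpan

theorem le_Hus (hKc : IsClosed (K : Set H)) (hK₂ : Reduces T₂ K) (hK₁ : UnitaryOn T₁ K)
    (hs : ShiftOn T₂ K) : K ≤ Hus T₁ T₂ :=
  (le_wanderingSpan h.star_mul_self₂ hKc hK₂.1 hK₂.2 hs).trans <|
    wanderingSpan_le (Submodule.isClosed_topologicalClosure _) fun n _ hk hk' =>
      pow_apply_mem_Hus (inf_le_unitaryPart h.star_mul_self₁ hK₁ h.reduces₁_ker₂.2 ⟨hk, hk'⟩) n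

theorem Hss_le_comm : Hss T₁ T₂ ≤ Hss T₂ T₁ :=
  Hss_le (Submodule.isClosed_topologicalClosure _) fun a b w hw₁ hw₂ => by
    rw [h.pow_apply_pow_apply]
    exact pow_apply_pow_apply_mem_Hss _ _ (pow_apply_mem_of_forall_mem h.reducesU_ker₂.1 _ hw₂)
      (pow_apply_mem_of_forall_mem h.reducesU_ker₁.1 _ hw₁)

theorem Hss_comm : Hss T₁ T₂ = Hss T₂ T₁ :=
  le_antisymm h.Hss_le_comm h.symm.Hss_le_comm

theorem adjoint₁_pow_apply_eq_zero {w : H} (b : ℕ) (hw : adjoint T₁ w = 0) :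
    adjoint T₁ ((T₂ ^ b) w) = 0 :=
  pow_apply_mem_of_forall_mem h.symm.reduces₁_ker₂.1 b hw

theorem reduces₁_Hss : Reduces T₁ (Hss T₁ T₂) := by
  constructor <;> intro x <;> refine apply_mem_Hss fun a b w hw₁ hw₂ => ?_
  · rw [← mul_apply_eq_comp, ← pow_succ']
    exact pow_apply_pow_apply_mem_Hss (a + 1) b hw₁ hw₂
  · cases a with
    | zero =>
      rw [pow_zero, one_apply_eq_self, h.adjoint₁_pow_apply_eq_zero b hw₁]
      exact zero_mem _
    | succ a =>
      rw [pow_succ', mul_apply_eq_comp, adjoint_apply_apply h.star_mul_self₁]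
      exact pow_apply_pow_apply_mem_Hss a b hw₁ hw₂

theorem reduces₂_Hss : Reduces T₂ (Hss T₁ T₂) :=
  h.Hss_comm ▸ h.symm.reduces₁_Hss

theorem Hss_le_wanderingSpan₁ : Hss T₁ T₂ ≤ wanderingSpan T₁ ⊤ :=
  Hss_le (Submodule.isClosed_topologicalClosure _) fun a b _ hw₁ _ =>
    pow_apply_mem_wanderingSpan Submodule.mem_top (h.adjoint₁_pow_apply_eq_zero b hw₁) a

theorem Hss_le_wanderingSpan₂ : Hss T₁ T₂ ≤ wanderingSpan T₂ ⊤ :=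
  h.Hss_comm ▸ h.symm.Hss_le_wanderingSpan₁

theorem shiftOn₁_Hss : ShiftOn T₁ (Hss T₁ T₂) :=
  unitaryPart_eq_bot_of_le_wanderingSpan h.star_mul_self₁ h.Hss_le_wanderingSpan₁

theorem shiftOn₂_Hss : ShiftOn T₂ (Hss T₁ T₂) :=
  unitaryPart_eq_bot_of_le_wanderingSpan h.star_mul_self₂ h.Hss_le_wanderingSpan₂

theorem pairwise_isOrtho :
    Huu T₁ T₂ ⟂ Hus T₁ T₂ ∧ Huu T₁ T₂ ⟂ Hsu T₁ T₂ ∧ Huu T₁ T₂ ⟂ Hss T₁ T₂ ∧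
      Hus T₁ T₂ ⟂ Hsu T₁ T₂ ∧ Hus T₁ T₂ ⟂ Hss T₁ T₂ ∧ Hsu T₁ T₂ ⟂ Hss T₁ T₂ := by
  have o₁ := unitaryPart_isOrtho_wanderingSpan h.star_mul_self₁ ⊤
  have o₂ := unitaryPart_isOrtho_wanderingSpan h.star_mul_self₂ ⊤
  have huu₁ : Huu T₁ T₂ ≤ unitaryPart T₁ ⊤ := h.Huu_eq ▸ inf_le_left
  have huu₂ : Huu T₁ T₂ ≤ unitaryPart T₂ ⊤ := h.Huu_eq ▸ inf_le_right
  have hsu₁ : Hsu T₁ T₂ ≤ wanderingSpan T₁ ⊤ := Hus_le_wanderingSpan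
  exact ⟨o₂.mono huu₂ Hus_le_wanderingSpan, o₁.mono huu₁ hsu₁, o₁.mono huu₁ h.Hss_le_wanderingSpan₁,
    o₁.mono h.Hus_le_unitaryPart hsu₁, o₁.mono h.Hus_le_unitaryPart h.Hss_le_wanderingSpan₁,
    o₂.mono h.symm.Hus_le_unitaryPart h.Hss_le_wanderingSpan₂⟩

theorem mem_unitaryPart₂_of_mem_orthogonal (hus : x ∈ (Hus T₁ T₂)ᗮ) (hss : x ∈ (Hss T₁ T₂)ᗮ) :
    x ∈ unitaryPart T₂ ⊤ := by
  refine mem_unitaryPart.2 fun n => ⟨_, Submodule.mem_top,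
    pow_apply_adjoint_pow_apply_eq_self_of_inner h.star_mul_self₂ (fun m => ?_) n⟩
  -- With `y = T₂*ᵐ x`, the vector `d = y - T₂ T₂* y` lies in `ker T₂*`, which reduces `T₁`. It is
  -- orthogonal to every `T₁ᵃ k` with `k ∈ ker T₁* ⊓ ker T₂*`, since `T₂ᵐ T₁ᵃ k ∈ Hss ⟂ x`; so the
  -- relative Wold decomposition puts `d` in `⋂ₐ T₁ᵃ (ker T₂*)`, whence `T₂ᵐ d ∈ Hus ⟂ x`.
  set y := (adjoint T₂ ^ m) x with hy
  have hd : y - T₂ (adjoint T₂ y) ∈ LinearMap.ker ((adjoint T₂ : H →L[ℂ] H) : H →ₗ[ℂ] H) := by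
    simp [adjoint_apply_apply h.star_mul_self₂]
  refine Submodule.inner_left_of_mem_orthogonal (pow_apply_mem_Hus (mem_unitaryPart_of_forall_inner
    h.star_mul_self₁ h.reduces₁_ker₂.1 h.reduces₁_ker₂.2 hd fun a k hk hk' => ?_) m) hus
  have hk₂ : adjoint T₂ ((T₁ ^ a) k) = 0 := pow_apply_mem_of_forall_mem h.reduces₁_ker₂.1 a hk
  have hss' : (T₂ ^ m) ((T₁ ^ a) k) ∈ Hss T₁ T₂ :=
    h.Hss_comm ▸ pow_apply_pow_apply_mem_Hss m a hk hk'
  rw [inner_sub_left, ← adjoint_inner_right T₂, hk₂, inner_zero_right, sub_zero, hy, ← adjoint_pow,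
    adjoint_inner_left]
  exact Submodule.inner_left_of_mem_orthogonal hss' hss

theorem eq_zero_of_mem_orthogonal (huu : x ∈ (Huu T₁ T₂)ᗮ) (hus : x ∈ (Hus T₁ T₂)ᗮ)
    (hsu : x ∈ (Hsu T₁ T₂)ᗮ) (hss : x ∈ (Hss T₁ T₂)ᗮ) : x = 0 := by
  have hx : x ∈ Huu T₁ T₂ := h.Huu_eq ▸ ⟨h.symm.mem_unitaryPart₂_of_mem_orthogonal hsu
    (h.Hss_comm ▸ hss), h.mem_unitaryPart₂_of_mem_orthogonal hus hss⟩
  exact inner_self_eq_zero.1 (Submodule.inner_right_of_mem_orthogonal hx huu)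

theorem sup_eq_top : Huu T₁ T₂ ⊔ Hus T₁ T₂ ⊔ Hsu T₁ T₂ ⊔ Hss T₁ T₂ = ⊤ := by
  obtain ⟨o₁₂, o₁₃, o₁₄, o₂₃, o₂₄, o₃₄⟩ := h.pairwise_isOrtho
  have : CompleteSpace (Huu T₁ T₂) := h.isClosed_Huu.completeSpace_coe
  have : CompleteSpace (Hus T₁ T₂) := Submodule.topologicalClosure.completeSpace _
  have : CompleteSpace (Hsu T₁ T₂) := Submodule.topologicalClosure.completeSpace _
  have : CompleteSpace (Hss T₁ T₂) := Submodule.topologicalClosure.completeSpace _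
  have hbot : (Hss T₁ T₂)ᗮ ⊓ ((Hsu T₁ T₂)ᗮ ⊓ ((Hus T₁ T₂)ᗮ ⊓ ((Huu T₁ T₂)ᗮ ⊓ ⊤))) ≤ ⊥ :=
    fun x ⟨hss, hsu, hus, huu, _⟩ =>
      (Submodule.mem_bot ℂ).2 (h.eq_zero_of_mem_orthogonal huu hus hsu hss)
  have := Submodule.le_sup_of_orthogonal_inf_le le_top <|
    Submodule.le_sup_of_orthogonal_inf_le (le_inf o₁₂.ge le_top) <|
    Submodule.le_sup_of_orthogonal_inf_le (le_inf o₂₃.ge (le_inf o₁₃.ge le_top)) <|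
    Submodule.le_sup_of_orthogonal_inf_le
      (le_inf o₃₄.ge (le_inf o₂₄.ge (le_inf o₁₄.ge le_top))) hbot
  simpa only [sup_bot_eq, sup_assoc, top_le_iff] using this

theorem le_Hss (hKc : IsClosed (K : Set H)) (hK₁ : Reduces T₁ K) (hK₂ : Reduces T₂ K)
    (hs₁ : ShiftOn T₁ K) (hs₂ : ShiftOn T₂ K) : K ≤ Hss T₁ T₂ := by
  set L := K ⊓ LinearMap.ker ((adjoint T₂ : H →L[ℂ] H) : H →ₗ[ℂ] H)
  have hL : Reduces T₁ L := hK₁.inf h.reduces₁_ker₂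
  have hLc : IsClosed (L : Set H) := hKc.inter (isClosed_ker (adjoint T₂))
  have hLs : unitaryPart T₁ L = ⊥ := le_bot_iff.1 ((unitaryPart_mono T₁ inf_le_left).trans hs₁.le)
  refine (le_wanderingSpan h.star_mul_self₂ hKc hK₂.1 hK₂.2 hs₂).trans
    (wanderingSpan_le (Submodule.isClosed_topologicalClosure _) fun m l hl hl' => ?_)
  have hW : wanderingSpan T₁ L ≤ (Hss T₁ T₂).comap ((T₂ ^ m : H →L[ℂ] H) : H →ₗ[ℂ] H) :=
    wanderingSpan_le ((Submodule.isClosed_topologicalClosure _).preimage (T₂ ^ m).continuous)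
      fun a k hk hk' => h.Hss_comm ▸ pow_apply_pow_apply_mem_Hss m a hk.2 hk'
  exact hW (le_wanderingSpan h.star_mul_self₁ hLc hL.1 hL.2 hLs ⟨hl, hl'⟩)

theorem eq_of_isOrtho_of_sup_eq_top {K₁ K₂ K₃ K₄ : Submodule ℂ H} (hsup : K₁ ⊔ K₂ ⊔ K₃ ⊔ K₄ = ⊤)
    (hortho : K₁ ⟂ K₂ ∧ K₁ ⟂ K₃ ∧ K₁ ⟂ K₄ ∧ K₂ ⟂ K₃ ∧ K₂ ⟂ K₄ ∧ K₃ ⟂ K₄)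
    (hred : ∀ M ∈ ({K₁, K₂, K₃, K₄} : Set (Submodule ℂ H)), Reduces T₁ M ∧ Reduces T₂ M)
    (hK₁ : UnitaryOn T₁ K₁ ∧ UnitaryOn T₂ K₁) (hK₂ : UnitaryOn T₁ K₂ ∧ ShiftOn T₂ K₂)
    (hK₃ : ShiftOn T₁ K₃ ∧ UnitaryOn T₂ K₃) (hK₄ : ShiftOn T₁ K₄ ∧ ShiftOn T₂ K₄) :
    K₁ = Huu T₁ T₂ ∧ K₂ = Hus T₁ T₂ ∧ K₃ = Hsu T₁ T₂ ∧ K₄ = Hss T₁ T₂ := by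
  obtain ⟨o₁₂, o₁₃, o₁₄, o₂₃, o₂₄, o₃₄⟩ := hortho
  obtain ⟨p₁₂, p₁₃, p₁₄, p₂₃, p₂₄, p₃₄⟩ := h.pairwise_isOrtho
  simp only [Set.mem_insert_iff, Set.mem_singleton_iff, forall_eq_or_imp, forall_eq] at hred
  obtain ⟨-, ⟨-, r₂⟩, ⟨r₃, -⟩, ⟨r₄₁, r₄₂⟩⟩ := hred
  have s₁ : K₁ ⊔ (K₂ ⊔ K₃ ⊔ K₄) = ⊤ := by rw [← hsup]; ac_rfl
  have s₂ : K₂ ⊔ (K₁ ⊔ K₃ ⊔ K₄) = ⊤ := by rw [← hsup]; ac_rfl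
  have s₃ : K₃ ⊔ (K₁ ⊔ K₂ ⊔ K₄) = ⊤ := by rw [← hsup]; ac_rfl
  have s₄ : K₄ ⊔ (K₁ ⊔ K₂ ⊔ K₃) = ⊤ := by rw [← hsup]; ac_rfl
  have l₁ := h.le_Huu hK₁.1 hK₁.2
  have l₂ := h.le_Hus (Submodule.isClosed_of_sup_eq_top_of_isOrtho s₂ (by
    simp only [Submodule.isOrtho_sup_right]; exact ⟨⟨o₁₂.symm, o₂₃⟩, o₂₄⟩)) r₂ hK₂.1 hK₂.2
  have l₃ := h.symm.le_Hus (Submodule.isClosed_of_sup_eq_top_of_isOrtho s₃ (by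
    simp only [Submodule.isOrtho_sup_right]; exact ⟨⟨o₁₃.symm, o₂₃.symm⟩, o₃₄⟩)) r₃ hK₃.2 hK₃.1
  have l₄ := h.le_Hss (Submodule.isClosed_of_sup_eq_top_of_isOrtho s₄ (by
    simp only [Submodule.isOrtho_sup_right]; exact ⟨⟨o₁₄.symm, o₂₄.symm⟩, o₃₄.symm⟩))
    r₄₁ r₄₂ hK₄.1 hK₄.2
  refine ⟨le_antisymm l₁ (Submodule.le_of_sup_eq_top_of_isOrtho s₁ l₁ ?_),
    le_antisymm l₂ (Submodule.le_of_sup_eq_top_of_isOrtho s₂ l₂ ?_),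
    le_antisymm l₃ (Submodule.le_of_sup_eq_top_of_isOrtho s₃ l₃ ?_),
    le_antisymm l₄ (Submodule.le_of_sup_eq_top_of_isOrtho s₄ l₄ ?_)⟩ <;>
    simp only [Submodule.isOrtho_sup_right]
  · exact ⟨⟨p₁₂.mono_right l₂, p₁₃.mono_right l₃⟩, p₁₄.mono_right l₄⟩
  · exact ⟨⟨p₁₂.symm.mono_right l₁, p₂₃.mono_right l₃⟩, p₂₄.mono_right l₄⟩
  · exact ⟨⟨p₁₃.symm.mono_right l₁, p₂₃.symm.mono_right l₂⟩, p₃₄.mono_right l₄⟩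
  · exact ⟨⟨p₁₄.symm.mono_right l₁, p₂₄.symm.mono_right l₂⟩, p₃₄.symm.mono_right l₃⟩

end IsDoublyTwisted

theorem stmt14 (T₁ T₂ U : H →L[ℂ] H)
    (h1iso : adjoint T₁ ∘L T₁ = 1) (h2iso : adjoint T₂ ∘L T₂ = 1)
    (hUunit : adjoint U ∘L U = 1 ∧ U ∘L adjoint U = 1)
    (hUT₁ : Commute U T₁) (hUT₂ : Commute U T₂)
    (htw1 : T₁ ∘L T₂ = U ∘L (T₂ ∘L T₁))
    (htw2 : adjoint T₁ ∘L T₂ = adjoint U ∘L (T₂ ∘L adjoint T₁)) :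
    (Huu T₁ T₂ ⊔ Hus T₁ T₂ ⊔ Hsu T₁ T₂ ⊔ Hss T₁ T₂ = ⊤) ∧
    (Submodule.IsOrtho (Huu T₁ T₂) (Hus T₁ T₂) ∧ Submodule.IsOrtho (Huu T₁ T₂) (Hsu T₁ T₂) ∧
      Submodule.IsOrtho (Huu T₁ T₂) (Hss T₁ T₂) ∧ Submodule.IsOrtho (Hus T₁ T₂) (Hsu T₁ T₂) ∧
      Submodule.IsOrtho (Hus T₁ T₂) (Hss T₁ T₂) ∧ Submodule.IsOrtho (Hsu T₁ T₂) (Hss T₁ T₂)) ∧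
    (∀ M ∈ ({Huu T₁ T₂, Hus T₁ T₂, Hsu T₁ T₂, Hss T₁ T₂} : Set (Submodule ℂ H)),
      Reduces T₁ M ∧ Reduces T₂ M) ∧
    (UnitaryOn T₁ (Huu T₁ T₂) ∧ UnitaryOn T₂ (Huu T₁ T₂)) ∧
    (UnitaryOn T₁ (Hus T₁ T₂) ∧ ShiftOn T₂ (Hus T₁ T₂)) ∧
    (ShiftOn T₁ (Hsu T₁ T₂) ∧ UnitaryOn T₂ (Hsu T₁ T₂)) ∧
    (ShiftOn T₁ (Hss T₁ T₂) ∧ ShiftOn T₂ (Hss T₁ T₂)) ∧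
    -- uniqueness of the fourfold Wold decomposition
    (∀ K₁ K₂ K₃ K₄ : Submodule ℂ H,
      (K₁ ⊔ K₂ ⊔ K₃ ⊔ K₄ = ⊤) →
      (Submodule.IsOrtho K₁ K₂ ∧ Submodule.IsOrtho K₁ K₃ ∧ Submodule.IsOrtho K₁ K₄ ∧
        Submodule.IsOrtho K₂ K₃ ∧ Submodule.IsOrtho K₂ K₄ ∧ Submodule.IsOrtho K₃ K₄) →
      (∀ M ∈ ({K₁, K₂, K₃, K₄} : Set (Submodule ℂ H)), Reduces T₁ M ∧ Reduces T₂ M) →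
      (UnitaryOn T₁ K₁ ∧ UnitaryOn T₂ K₁) →
      (UnitaryOn T₁ K₂ ∧ ShiftOn T₂ K₂) →
      (ShiftOn T₁ K₃ ∧ UnitaryOn T₂ K₃) →
      (ShiftOn T₁ K₄ ∧ ShiftOn T₂ K₄) →
      K₁ = Huu T₁ T₂ ∧ K₂ = Hus T₁ T₂ ∧ K₃ = Hsu T₁ T₂ ∧ K₄ = Hss T₁ T₂) := by
  have h : IsDoublyTwisted T₁ T₂ U :=
    ⟨h1iso, h2iso, ⟨hUunit.1, hUunit.2⟩, hUT₁, hUT₂, htw1, htw2⟩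
  refine ⟨h.sup_eq_top, h.pairwise_isOrtho, ?_, ⟨h.unitaryOn₁_Huu, h.unitaryOn₂_Huu⟩,
    ⟨h.unitaryOn₁_Hus, h.shiftOn₂_Hus⟩, ⟨h.symm.shiftOn₂_Hus, h.symm.unitaryOn₁_Hus⟩,
    ⟨h.shiftOn₁_Hss, h.shiftOn₂_Hss⟩, fun _ _ _ _ => h.eq_of_isOrtho_of_sup_eq_top⟩
  simp only [Set.mem_insert_iff, Set.mem_singleton_iff]
  rintro M (rfl | rfl | rfl | rfl)
  exacts [⟨h.reduces₁_Huu, h.reduces₂_Huu⟩, ⟨h.reduces₁_Hus, h.reduces₂_Hus⟩,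
    ⟨h.symm.reduces₂_Hus, h.symm.reduces₁_Hus⟩, ⟨h.reduces₁_Hss, h.reduces₂_Hss⟩]
end
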